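/- Approximation theorem for relational graph models: for every λ-term M, the judgment Γ ⊢_D M : α is derivable if and only if there exists a finite approximant t ∈ BT*(M) such that Γ ⊢_D t : α is derivable. Consequently the logical interpretation of M equals the union of the logical interpretations of its finite Böhm-tree approximants. -/

import Mathlib

/-- Untyped λ⊥-terms in de Bruijn notation, intrinsically scoped:
`Tm n` is the set of λ⊥-terms with free variables among `x₀,…,x_{n-1}`. -/
inductive Tm : ℕ → Type
  | var : ∀ {n : ℕ}, Fin n → Tm n
  | lam : ∀ {n : ℕ}, Tm (n + 1) → Tm n
  | app : ∀ {n : ℕ}, Tm n → Tm n → Tm n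
  | bot : ∀ {n : ℕ}, Tm n

/-- Renaming of free variables. -/
def Tm.rename : ∀ {n m : ℕ}, (Fin n → Fin m) → Tm n → Tm m
  | _, _, f, .var k => .var (f k)
  | _, m, f, .lam t =>
      .lam (t.rename fun k => Fin.cases (motive := fun _ => Fin (m + 1)) 0
        (fun j => (f j).succ) k)
  | _, _, f, .app t u => .app (t.rename f) (u.rename f)
  | _, _, _, .bot => .bot

/-- Simultaneous (capture-avoiding) substitution. -/
def Tm.subst : ∀ {n m : ℕ}, (Fin n → Tm m) → Tm n → Tm m
  | _, _, σ, .var k => σ k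
  | _, m, σ, .lam t =>
      .lam (t.subst fun k => Fin.cases (motive := fun _ => Tm (m + 1)) (.var 0)
        (fun j => (σ j).rename Fin.succ) k)
  | _, _, σ, .app t u => .app (t.subst σ) (u.subst σ)
  | _, _, _, .bot => .bot

/-- Substitution `M{N/y}` of `N` for the 0-th free variable of `M`. -/
def Tm.subst1 {n : ℕ} (M : Tm (n + 1)) (N : Tm n) : Tm n :=
  M.subst (Fin.cases (motive := fun _ => Tm n) N Tm.var)

/-- One-step β-reduction (contextual closure of `(λx.M)N → M{N/x}`). -/
inductive Beta : ∀ {n : ℕ}, Tm n → Tm n → Prop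
  | redex {n} (M : Tm (n + 1)) (N : Tm n) : Beta (.app (.lam M) N) (M.subst1 N)
  | appL {n} {M M' N : Tm n} : Beta M M' → Beta (.app M N) (.app M' N)
  | appR {n} {M N N' : Tm n} : Beta N N' → Beta (.app M N) (.app M N')
  | lam {n} {M M' : Tm (n + 1)} : Beta M M' → Beta (.lam M) (.lam M')

/-- A λ⊥-term is a λ-term when it contains no occurrence of `⊥`. -/
def BotFree : ∀ {n : ℕ}, Tm n → Prop
  | _, .var _ => True
  | _, .lam M => BotFree M
  | _, .app M N => BotFree M ∧ BotFree N
  | _, .bot => False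

/-- The environment assigning the multiset `[α]` to the variable `k` and `0` elsewhere. -/
def single {D : Type} {n : ℕ} (k : Fin n) (α : D) : Fin n → Multiset D :=
  fun j => if j = k then {α} else 0

/-- The relational interpretation `⟦M⟧_{x̄} ⊆ M_f(D)ⁿ × D` of a λ⊥-term in a relational
graph model `(D, i)`. -/
def Interp {D : Type} (i : Multiset D × D → D) :
    ∀ {n : ℕ}, Tm n → Set ((Fin n → Multiset D) × D)
  | _, .var k => {p | ∃ α, p = (single k α, α)}
  | _, .lam M => {p | ∃ Γ a α, (Fin.cons a Γ, α) ∈ Interp i M ∧ p = (Γ, i (a, α))}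
  | n, .app M N =>
      {p | ∃ (Γ₀ : Fin n → Multiset D) (l : List ((Fin n → Multiset D) × D)),
        (Γ₀, i (↑(l.map Prod.snd), p.2)) ∈ Interp i M ∧
        (∀ q ∈ l, q ∈ Interp i N) ∧ p.1 = Γ₀ + (l.map Prod.fst).sum}
  | _, .bot => ∅

/-- The non-idempotent intersection type system associated with a relational graph model
`(D, i)`: `Der i Γ M α m` states that the judgment `Γ ⊢ M : α` is derivable by a
derivation `π` with `#app(π) = m` occurrences of the application rule. -/
inductive Der {D : Type} (i : Multiset D × D → D) :
    ∀ {n : ℕ}, (Fin n → Multiset D) → Tm n → D → ℕ → Prop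
  | var {n} (k : Fin n) (α : D) : Der i (single k α) (.var k) α 0
  | lam {n} {Γ : Fin n → Multiset D} {a : Multiset D} {M : Tm (n + 1)} {α : D} {m : ℕ} :
      Der i (Fin.cons a Γ) M α m → Der i Γ (.lam M) (i (a, α)) m
  | app {n} {Γ : Fin n → Multiset D} {M N : Tm n} {α : D} {m : ℕ}
      (l : List ((Fin n → Multiset D) × D × ℕ)) :
      Der i Γ M (i (↑(l.map fun q => q.2.1), α)) m →
      (∀ q ∈ l, Der i q.1 N q.2.1 q.2.2) →
      Der i (Γ + (l.map fun q => q.1).sum) (.app M N) α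
        (m + (l.map fun q => q.2.2).sum + 1)

/-- The direct approximant `ω(M)` of a λ⊥-term. -/
def Da : ∀ {n : ℕ}, Tm n → Tm n
  | _, .var k => .var k
  | _, .bot => .bot
  | _, .lam M =>
      match Da M with
      | .bot => .bot
      | M' => .lam M'
  | _, .app M N =>
      match Da M with
      | .bot => .bot
      | .lam _ => .bot
      | M' => .app M' (Da N)

/-!
Direct approximants lie below their terms in the order that replaces subterms by `⊥`, and
derivations transfer upwards along that order. Typability is invariant under β-conversion:
subject reduction and expansion both follow from the substitution lemma for multiset contexts and
its converse. Hence a type of `ω(M')` with `M' =_β M` is a type of `M`.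

Conversely, let `π` derive `Γ ⊢ M : α` with `m` application rules. Either `π` already types
`ω(M)`, or `M` has a redex that `π` types (in head position, or inside a typed argument), and
contracting it gives a derivation with fewer application rules: the derivations of the argument
replace the axioms for the bound variable. Induction on `m` yields a reduct `M'` of `M` with
`Γ ⊢ ω(M') : α`.
-/

open Relation

section

variable {D : Type} {i : Multiset D × D → D}

namespace Tm

inductive Approx : ∀ {n : ℕ}, Tm n → Tm n → Prop
  | bot {n} (t : Tm n) : Approx .bot t
  | var {n} (k : Fin n) : Approx (.var k) (.var k)
  | lam {n} {t s : Tm (n + 1)} : Approx t s → Approx (.lam t) (.lam s)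
  | app {n} {t₁ s₁ t₂ s₂ : Tm n} : Approx t₁ s₁ → Approx t₂ s₂ → Approx (.app t₁ t₂) (.app s₁ s₂)

end Tm

theorem da_lam_of_ne_bot {n : ℕ} {M : Tm (n + 1)} (h : Da M ≠ .bot) :
    Da (.lam M) = .lam (Da M) := by
  cases hM : Da M <;> simp_all [Da]

theorem da_app_of_ne_bot_of_ne_lam {n : ℕ} {M N : Tm n} (hbot : Da M ≠ .bot)
    (hlam : ∀ P, Da M ≠ .lam P) : Da (.app M N) = .app (Da M) (Da N) := by
  cases hM : Da M <;> simp_all [Da]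

theorem exists_eq_lam_of_da_eq_lam {n : ℕ} {M : Tm n} {Q : Tm (n + 1)} (h : Da M = .lam Q) :
    ∃ P, M = .lam P := by
  cases M with
  | lam P => exact ⟨P, rfl⟩
  | var k => cases h
  | bot => cases h
  | app M N => cases hM : Da M <;> simp_all [Da]

theorem da_approx {n : ℕ} (t : Tm n) : (Da t).Approx t := by
  induction t with
  | var k => exact .var k
  | bot => exact .bot _
  | lam M ih =>
    by_cases h : Da M = .bot
    · simp only [Da, h]; exact .bot _
    · rw [da_lam_of_ne_bot h]; exact ih.lam
  | app M N ihM ihN =>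
    by_cases h : Da M = .bot ∨ ∃ P, Da M = .lam P
    · rcases h with h | ⟨P, h⟩ <;> simp only [Da, h] <;> exact .bot _
    · push Not at h
      rw [da_app_of_ne_bot_of_ne_lam h.1 h.2]; exact ihM.app ihN

namespace Der

theorem ne_bot {n : ℕ} {Γ : Fin n → Multiset D} {t : Tm n} {α : D} {p : ℕ}
    (h : Der i Γ t α p) : t ≠ .bot := by
  rintro rfl; cases h

theorem var_inv {n : ℕ} {Γ : Fin n → Multiset D} {k : Fin n} {α : D} {p : ℕ}
    (h : Der i Γ (.var k) α p) : Γ = single k α ∧ p = 0 := by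
  cases h; exact ⟨rfl, rfl⟩

theorem lam_inv {n : ℕ} {Γ : Fin n → Multiset D} {M : Tm (n + 1)} {β : D} {p : ℕ}
    (h : Der i Γ (.lam M) β p) : ∃ a α, β = i (a, α) ∧ Der i (Fin.cons a Γ) M α p := by
  cases h with | lam h => exact ⟨_, _, rfl, h⟩

theorem mono {n : ℕ} {Γ : Fin n → Multiset D} {t s : Tm n} {α : D} {p : ℕ}
    (h : Der i Γ t α p) (hts : t.Approx s) : Der i Γ s α p := by
  induction h with
  | var k α => cases hts; exact .var k α
  | lam _ ih => cases hts with | lam hts => exact .lam (ih hts)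
  | app l _ _ ih ihargs =>
    cases hts with | app h₁ h₂ => exact .app l (ih h₁) fun q hq => ihargs q hq h₂

theorem of_da {n : ℕ} {Γ : Fin n → Multiset D} {M : Tm n} {α : D} {p : ℕ}
    (h : Der i Γ (Da M) α p) : Der i Γ M α p :=
  h.mono (da_approx M)

end Der

theorem BotFree.rename {n : ℕ} {t : Tm n} (h : BotFree t) {m : ℕ} (f : Fin n → Fin m) :
    BotFree (t.rename f) := by
  induction t generalizing m with
  | var k => trivial
  | bot => exact h
  | lam M ih => exact ih h _
  | app M N ihM ihN => exact ⟨ihM h.1 f, ihN h.2 f⟩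

theorem BotFree.subst {n : ℕ} {t : Tm n} (h : BotFree t) {m : ℕ} {σ : Fin n → Tm m}
    (hσ : ∀ k, BotFree (σ k)) : BotFree (t.subst σ) := by
  induction t generalizing m with
  | var k => exact hσ k
  | bot => exact h
  | lam M ih =>
    refine ih h fun k => ?_
    cases k using Fin.cases with
    | zero => trivial
    | succ j => exact (hσ j).rename Fin.succ
  | app M N ihM ihN => exact ⟨ihM h.1 hσ, ihN h.2 hσ⟩

theorem BotFree.of_beta {n : ℕ} {t t' : Tm n} (hβ : Beta t t') (h : BotFree t) : BotFree t' := by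
  induction hβ with
  | redex P N =>
    refine BotFree.subst (t := P) h.1 fun k => ?_
    cases k using Fin.cases with
    | zero => exact h.2
    | succ j => trivial
  | appL _ ih => exact ⟨ih h.1, h.2⟩
  | appR _ ih => exact ⟨h.1, ih h.2⟩
  | lam _ ih => exact ih h

theorem BotFree.of_reflTransGen {n : ℕ} {t t' : Tm n} (hred : ReflTransGen Beta t t')
    (h : BotFree t) : BotFree t' := by
  induction hred with
  | refl => exact h
  | tail _ hβ ih => exact ih.of_beta hβ

theorem single_eq_pi_single {n : ℕ} (k : Fin n) (α : D) : single k α = Pi.single k {α} := by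
  funext j; simp [single, Pi.single_apply]

/-- The judgement `E ⊢ N : a` for a multiset `a`, i.e. the argument premises of the application
rule, with `s` application rules in total. -/
inductive DerBag (i : Multiset D × D → D) {n : ℕ} (N : Tm n) :
    (Fin n → Multiset D) → Multiset D → ℕ → Prop
  | zero : DerBag i N 0 0 0
  | cons {Γ E : Fin n → Multiset D} {α : D} {a : Multiset D} {p s : ℕ} :
      Der i Γ N α p → DerBag i N E a s → DerBag i N (Γ + E) (α ::ₘ a) (p + s)

namespace DerBag

variable {n : ℕ} {N : Tm n} {E : Fin n → Multiset D} {a : Multiset D} {s : ℕ}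

theorem singleton {Γ : Fin n → Multiset D} {α : D} {p : ℕ} (h : Der i Γ N α p) :
    DerBag i N Γ {α} p := by
  simpa using DerBag.cons h .zero

theorem add {E' : Fin n → Multiset D} {a' : Multiset D} {s' : ℕ}
    (h : DerBag i N E a s) (h' : DerBag i N E' a' s') :
    DerBag i N (E + E') (a + a') (s + s') := by
  induction h with
  | zero => simpa using h'
  | cons hd _ ih => simpa only [add_assoc, Multiset.cons_add] using DerBag.cons hd ih

theorem zero_inv (h : DerBag i N E 0 s) : E = 0 ∧ s = 0 := by
  generalize ha : (0 : Multiset D) = a at h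
  cases h with
  | zero => exact ⟨rfl, rfl⟩
  | cons => exact absurd ha.symm (Multiset.cons_ne_zero)

theorem cons_inv {α : D} (h : DerBag i N E (α ::ₘ a) s) :
    ∃ Γ p E' s', Der i Γ N α p ∧ DerBag i N E' a s' ∧ E = Γ + E' ∧ s = p + s' := by
  generalize hb : α ::ₘ a = b at h
  induction h generalizing a with
  | zero => exact absurd hb Multiset.cons_ne_zero
  | @cons Γ₁ E₁ β a₁ p₁ s₁ hd h ih =>
    rcases Multiset.cons_eq_cons.1 hb with ⟨rfl, rfl⟩ | ⟨-, c, rfl, rfl⟩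
    · exact ⟨Γ₁, p₁, E₁, s₁, hd, h, rfl, rfl⟩
    · obtain ⟨Γ, p, E', s', hd', h', rfl, rfl⟩ := ih rfl
      exact ⟨Γ, p, Γ₁ + E', p₁ + s', hd', DerBag.cons hd h', add_left_comm _ _ _, by omega⟩

theorem split {b : Multiset D} (h : DerBag i N E (a + b) s) :
    ∃ E₁ E₂ s₁ s₂, DerBag i N E₁ a s₁ ∧ DerBag i N E₂ b s₂ ∧ E = E₁ + E₂ ∧ s = s₁ + s₂ := by
  induction a using Multiset.induction_on generalizing E s with
  | empty => exact ⟨0, E, 0, s, .zero, by simpa using h, by simp, by simp⟩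
  | cons α a ih =>
    rw [Multiset.cons_add] at h
    obtain ⟨Γ, p, E', s', hd, h', rfl, rfl⟩ := cons_inv h
    obtain ⟨E₁, E₂, s₁, s₂, h₁, h₂, rfl, rfl⟩ := ih h'
    exact ⟨Γ + E₁, E₂, p + s₁, s₂, DerBag.cons hd h₁, h₂, (add_assoc _ _ _).symm, by omega⟩

theorem singleton_inv {α : D} (h : DerBag i N E {α} s) : Der i E N α s := by
  obtain ⟨Γ, p, E', s', hd, h', rfl, rfl⟩ := cons_inv (a := 0) h
  obtain ⟨rfl, rfl⟩ := zero_inv h'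
  simpa using hd

theorem var (k : Fin n) (a : Multiset D) : DerBag i (.var k) (Pi.single k a) a 0 := by
  induction a using Multiset.induction_on with
  | empty => simpa using (DerBag.zero : DerBag i (.var k) _ _ _)
  | cons α a ih =>
    simpa [single_eq_pi_single, ← Pi.single_add, Multiset.singleton_add] using
      DerBag.cons (Der.var (i := i) k α) ih

theorem var_inv {k : Fin n} (h : DerBag i (.var k) E a s) : E = Pi.single k a := by
  induction h with
  | zero => simp
  | cons hd _ ih =>
    rw [hd.var_inv.1, ih, single_eq_pi_single, ← Pi.single_add, Multiset.singleton_add]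

theorem of_list (l : List ((Fin n → Multiset D) × D × ℕ))
    (h : ∀ q ∈ l, Der i q.1 N q.2.1 q.2.2) :
    DerBag i N (l.map (·.1)).sum ↑(l.map (·.2.1)) (l.map (·.2.2)).sum := by
  induction l with
  | nil => exact .zero
  | cons q l ih =>
    simpa using DerBag.cons (h q (List.mem_cons_self ..))
      (ih fun q hq => h q (List.mem_cons_of_mem _ hq))

theorem exists_list (h : DerBag i N E a s) :
    ∃ l : List ((Fin n → Multiset D) × D × ℕ), (∀ q ∈ l, Der i q.1 N q.2.1 q.2.2) ∧
      (l.map (·.1)).sum = E ∧ ↑(l.map (·.2.1)) = a ∧ (l.map (·.2.2)).sum = s := by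
  induction h with
  | zero => exact ⟨[], by simp, rfl, rfl, rfl⟩
  | @cons Γ _ α _ p _ hd _ ih =>
    obtain ⟨l, hl, rfl, rfl, rfl⟩ := ih
    refine ⟨(Γ, α, p) :: l, ?_, by simp, by simp, by simp⟩
    rintro q (_ | ⟨_, hq⟩)
    exacts [hd, hl q hq]

theorem map {m : ℕ} {N' : Tm m} (F : (Fin n → Multiset D) →+ (Fin m → Multiset D))
    (hN : ∀ {Γ α p}, Der i Γ N α p → Der i (F Γ) N' α p) (h : DerBag i N E a s) :
    DerBag i N' (F E) a s := by
  induction h with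
  | zero => simpa using (DerBag.zero : DerBag i N' 0 0 0)
  | cons hd _ ih => simpa using DerBag.cons (hN hd) ih

theorem map_inv {m : ℕ} {N' : Tm m} {E' : Fin m → Multiset D}
    (F : (Fin n → Multiset D) →+ (Fin m → Multiset D))
    (hN : ∀ {Δ α p}, Der i Δ N' α p → ∃ Γ, Δ = F Γ ∧ Der i Γ N α p)
    (h : DerBag i N' E' a s) : ∃ E, E' = F E ∧ DerBag i N E a s := by
  induction h with
  | zero => exact ⟨0, by simp, .zero⟩
  | cons hd _ ih =>
    obtain ⟨Γ, rfl, hd'⟩ := hN hd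
    obtain ⟨E, rfl, h'⟩ := ih
    exact ⟨Γ + E, by simp, .cons hd' h'⟩

theorem exists_le_of_forall {N' : Tm n}
    (hN : ∀ {Γ α p}, Der i Γ N α p → ∃ p' ≤ p, Der i Γ N' α p') (h : DerBag i N E a s) :
    ∃ s' ≤ s, DerBag i N' E a s' := by
  induction h with
  | zero => exact ⟨0, le_rfl, .zero⟩
  | cons hd _ ih =>
    obtain ⟨p', hp', hd'⟩ := hN hd
    obtain ⟨s', hs', h'⟩ := ih
    exact ⟨p' + s', by omega, DerBag.cons hd' h'⟩

theorem exists_of_forall {N' : Tm n}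
    (hN : ∀ {Γ α p}, Der i Γ N α p → ∃ p', Der i Γ N' α p') (h : DerBag i N E a s) :
    ∃ s', DerBag i N' E a s' := by
  induction h with
  | zero => exact ⟨0, .zero⟩
  | cons hd _ ih =>
    obtain ⟨p', hd'⟩ := hN hd
    obtain ⟨s', h'⟩ := ih
    exact ⟨p' + s', DerBag.cons hd' h'⟩

end DerBag

namespace Der

variable {n : ℕ} {Γ E : Fin n → Multiset D} {M N : Tm n} {a : Multiset D} {α : D} {m s : ℕ}

theorem app_of_derBag (hM : Der i Γ M (i (a, α)) m) (hN : DerBag i N E a s) :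
    Der i (Γ + E) (.app M N) α (m + s + 1) := by
  obtain ⟨l, hl, rfl, rfl, rfl⟩ := hN.exists_list
  exact .app l hM hl

theorem app_inv {Δ : Fin n → Multiset D} {p : ℕ} (h : Der i Δ (.app M N) α p) :
    ∃ Γ E a m s, Der i Γ M (i (a, α)) m ∧ DerBag i N E a s ∧ Δ = Γ + E ∧ p = m + s + 1 := by
  cases h with
  | app l hM hl => exact ⟨_, _, _, _, _, hM, .of_list l hl, rfl, rfl⟩

end Der

def renameCtx {n m : ℕ} (f : Fin n → Fin m) : (Fin n → Multiset D) →+ (Fin m → Multiset D) where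
  toFun Γ := ∑ x, Pi.single (f x) (Γ x)
  map_zero' := by simp
  map_add' Γ Δ := by simp [Pi.single_add, Finset.sum_add_distrib]

theorem renameCtx_apply {n m : ℕ} (f : Fin n → Fin m) (Γ : Fin n → Multiset D) :
    renameCtx f Γ = ∑ x, Pi.single (f x) (Γ x) := rfl

theorem renameCtx_single {n m : ℕ} (f : Fin n → Fin m) (k : Fin n) (a : Multiset D) :
    renameCtx f (Pi.single k a) = Pi.single (f k) a := by
  rw [renameCtx_apply, Finset.sum_eq_single k (fun x _ hx => by simp [hx]) (by simp)]
  simp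

theorem renameCtx_succ {m : ℕ} (Δ : Fin m → Multiset D) :
    renameCtx Fin.succ Δ = Fin.cons 0 Δ := by
  funext j
  cases j using Fin.cases <;> simp [renameCtx_apply, Finset.sum_apply, Pi.single_apply]

theorem cons_eq_single_add_renameCtx_succ {m : ℕ} (a : Multiset D) (Δ : Fin m → Multiset D) :
    Fin.cons a Δ = Pi.single 0 a + renameCtx Fin.succ Δ := by
  rw [renameCtx_succ]
  funext j
  cases j using Fin.cases <;> simp

-- The lifts performed under a binder by `Tm.rename` and `Tm.subst`.
def liftRen {n m : ℕ} (f : Fin n → Fin m) : Fin (n + 1) → Fin (m + 1) :=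
  fun k => Fin.cases (motive := fun _ => Fin (m + 1)) 0 (fun j => (f j).succ) k

def liftSubst {n m : ℕ} (σ : Fin n → Tm m) : Fin (n + 1) → Tm (m + 1) :=
  fun k => Fin.cases (motive := fun _ => Tm (m + 1)) (.var 0) (fun j => (σ j).rename Fin.succ) k

theorem renameCtx_liftRen {n m : ℕ} (f : Fin n → Fin m) (Γ : Fin (n + 1) → Multiset D) :
    renameCtx (liftRen f) Γ = Fin.cons (Γ 0) (renameCtx f (Fin.tail Γ)) := by
  rw [cons_eq_single_add_renameCtx_succ, renameCtx_apply (liftRen f), Fin.sum_univ_succ,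
    renameCtx_apply f, map_sum]
  simp [liftRen, renameCtx_single, Fin.tail]

namespace Der

theorem rename {n : ℕ} (t : Tm n) {m : ℕ} (f : Fin n → Fin m) {Γ : Fin n → Multiset D}
    {α : D} {p : ℕ} (h : Der i Γ t α p) : Der i (renameCtx f Γ) (t.rename f) α p := by
  induction t generalizing m α p with
  | var k =>
    obtain ⟨rfl, rfl⟩ := h.var_inv
    rw [single_eq_pi_single, renameCtx_single, ← single_eq_pi_single]
    exact .var _ _
  | bot => cases h
  | lam M ih =>
    obtain ⟨a, β, rfl, hM⟩ := h.lam_inv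
    have := ih (liftRen f) hM
    rw [renameCtx_liftRen, Fin.cons_zero, Fin.tail_cons] at this
    exact .lam this
  | app M N ihM ihN =>
    obtain ⟨Γ, E, a, m, s, hM, hN, rfl, rfl⟩ := h.app_inv
    rw [map_add]
    exact (ihM f hM).app_of_derBag (hN.map (renameCtx f) fun hd => ihN f hd)

theorem rename_inv {n : ℕ} (t : Tm n) {m : ℕ} (f : Fin n → Fin m) {Δ : Fin m → Multiset D}
    {α : D} {p : ℕ} (h : Der i Δ (t.rename f) α p) :
    ∃ Γ, Δ = renameCtx f Γ ∧ Der i Γ t α p := by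
  induction t generalizing m Δ α p with
  | var k =>
    obtain ⟨rfl, rfl⟩ := h.var_inv
    exact ⟨single k α, by simp [single_eq_pi_single, renameCtx_single], .var k α⟩
  | bot => cases h
  | lam M ih =>
    obtain ⟨a, β, rfl, hM⟩ := h.lam_inv
    obtain ⟨Γ, hΓ, hM'⟩ := ih (liftRen f) hM
    rw [renameCtx_liftRen, Fin.cons_inj] at hΓ
    obtain ⟨rfl, rfl⟩ := hΓ
    exact ⟨Fin.tail Γ, rfl, .lam (by rwa [Fin.cons_self_tail])⟩
  | app M N ihM ihN =>
    obtain ⟨Δ₁, Δ₂, a, m, s, hM, hN, rfl, rfl⟩ := h.app_inv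
    obtain ⟨Γ₁, rfl, hM'⟩ := ihM f hM
    obtain ⟨Γ₂, rfl, hN'⟩ := hN.map_inv (renameCtx f) (ihN f)
    exact ⟨Γ₁ + Γ₂, (map_add _ _ _).symm, hM'.app_of_derBag hN'⟩

end Der

namespace DerBag

variable {n m : ℕ} {σ : Fin n → Tm m}

theorem split_pi {E : Fin n → Fin m → Multiset D} {Γ Γ' : Fin n → Multiset D} {s : Fin n → ℕ}
    (h : ∀ k, DerBag i (σ k) (E k) (Γ k + Γ' k) (s k)) :
    ∃ E₁ E₂ s₁ s₂, (∀ k, DerBag i (σ k) (E₁ k) (Γ k) (s₁ k)) ∧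
      (∀ k, DerBag i (σ k) (E₂ k) (Γ' k) (s₂ k)) ∧ E = E₁ + E₂ ∧ s = s₁ + s₂ := by
  choose E₁ E₂ s₁ s₂ h₁ h₂ hE hs using fun k => (h k).split
  exact ⟨E₁, E₂, s₁, s₂, h₁, h₂, funext hE, funext hs⟩

theorem subst {N : Tm n}
    (hN : ∀ {Γ α p} {E : Fin n → Fin m → Multiset D} {s : Fin n → ℕ}, Der i Γ N α p →
      (∀ k, DerBag i (σ k) (E k) (Γ k) (s k)) → Der i (∑ k, E k) (N.subst σ) α (p + ∑ k, s k))
    {Γ : Fin n → Multiset D} {a : Multiset D} {t : ℕ} (h : DerBag i N Γ a t)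
    {E : Fin n → Fin m → Multiset D} {s : Fin n → ℕ}
    (hσ : ∀ k, DerBag i (σ k) (E k) (Γ k) (s k)) :
    DerBag i (N.subst σ) (∑ k, E k) a (t + ∑ k, s k) := by
  induction h generalizing E s with
  | zero =>
    obtain rfl : E = 0 := funext fun k => (hσ k).zero_inv.1
    obtain rfl : s = 0 := funext fun k => (hσ k).zero_inv.2
    simpa using (DerBag.zero : DerBag i (N.subst σ) 0 0 0)
  | cons hd _ ih =>
    obtain ⟨E₁, E₂, s₁, s₂, h₁, h₂, rfl, rfl⟩ := split_pi hσ
    simpa [Finset.sum_add_distrib, add_add_add_comm] using DerBag.cons (hN hd h₁) (ih h₂)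

end DerBag

theorem Der.subst {n : ℕ} (M : Tm n) {m : ℕ} {σ : Fin n → Tm m} {Γ : Fin n → Multiset D}
    {α : D} {p : ℕ} (h : Der i Γ M α p) {E : Fin n → Fin m → Multiset D} {s : Fin n → ℕ}
    (hσ : ∀ k, DerBag i (σ k) (E k) (Γ k) (s k)) :
    Der i (∑ k, E k) (M.subst σ) α (p + ∑ k, s k) := by
  induction M generalizing m α p with
  | var k =>
    obtain ⟨rfl, rfl⟩ := h.var_inv
    simp only [Tm.subst]
    have hzero : ∀ j ≠ k, E j = 0 ∧ s j = 0 := fun j hj =>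
      DerBag.zero_inv (by simpa [single, hj] using hσ j)
    rw [Finset.sum_eq_single k (fun j _ hj => (hzero j hj).1) (by simp),
      Finset.sum_eq_single k (fun j _ hj => (hzero j hj).2) (by simp), zero_add]
    exact DerBag.singleton_inv (by simpa [single] using hσ k)
  | bot => cases h
  | @lam n M ih =>
    obtain ⟨a, β, rfl, hM⟩ := h.lam_inv
    have hσ' : ∀ k, DerBag i (liftSubst σ k)
        ((Fin.cons (Pi.single 0 a) fun j => renameCtx Fin.succ (E j) :
          Fin (n + 1) → Fin (m + 1) → Multiset D) k)
        ((Fin.cons a Γ : Fin (n + 1) → Multiset D) k) ((Fin.cons 0 s : Fin (n + 1) → ℕ) k) := by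
      intro k
      cases k using Fin.cases with
      | zero => exact DerBag.var 0 a
      | succ j => exact (hσ j).map _ fun hd => hd.rename _ Fin.succ
    have := ih hM hσ'
    rw [Fin.sum_univ_succ, Fin.sum_univ_succ] at this
    simp only [Fin.cons_zero, Fin.cons_succ, ← map_sum, ← cons_eq_single_add_renameCtx_succ,
      zero_add] at this
    exact .lam this
  | app M N ihM ihN =>
    obtain ⟨Γ, Γ', a, m, t, hM, hN, rfl, rfl⟩ := h.app_inv
    obtain ⟨E₁, E₂, s₁, s₂, h₁, h₂, rfl, rfl⟩ := DerBag.split_pi hσ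
    have hE : ∑ k, (E₁ + E₂) k = ∑ k, E₁ k + ∑ k, E₂ k := by simp [Finset.sum_add_distrib]
    have hs : m + t + 1 + ∑ k, (s₁ + s₂) k = m + ∑ k, s₁ k + (t + ∑ k, s₂ k) + 1 := by
      simp only [Pi.add_apply, Finset.sum_add_distrib]; omega
    rw [hE, hs]
    exact (ihM hM h₁).app_of_derBag (hN.subst (fun hd hσ => ihN hd hσ) h₂)

theorem DerBag.subst_inv {n m : ℕ} {σ : Fin n → Tm m} {N : Tm n}
    (hN : ∀ {Δ α p}, Der i Δ (N.subst σ) α p → ∃ (Γ : Fin n → Multiset D)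
      (E : Fin n → Fin m → Multiset D) (s : Fin n → ℕ) (p₀ : ℕ),
      Der i Γ N α p₀ ∧ (∀ k, DerBag i (σ k) (E k) (Γ k) (s k)) ∧ Δ = ∑ k, E k)
    {Δ : Fin m → Multiset D} {a : Multiset D} {t : ℕ} (h : DerBag i (N.subst σ) Δ a t) :
    ∃ (Γ : Fin n → Multiset D) (E : Fin n → Fin m → Multiset D) (s : Fin n → ℕ) (t₀ : ℕ),
      DerBag i N Γ a t₀ ∧ (∀ k, DerBag i (σ k) (E k) (Γ k) (s k)) ∧ Δ = ∑ k, E k := by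
  induction h with
  | zero => exact ⟨0, 0, 0, 0, .zero, fun _ => .zero, by simp⟩
  | cons hd _ ih =>
    obtain ⟨Γ, E, s, p, hd', hσ, rfl⟩ := hN hd
    obtain ⟨Γ', E', s', t, h', hσ', rfl⟩ := ih
    exact ⟨Γ + Γ', E + E', s + s', p + t, .cons hd' h', fun k => (hσ k).add (hσ' k),
      by simp [Finset.sum_add_distrib]⟩

theorem Der.subst_inv {n : ℕ} (M : Tm n) {m : ℕ} {σ : Fin n → Tm m} {Δ : Fin m → Multiset D}
    {α : D} {p : ℕ} (h : Der i Δ (M.subst σ) α p) :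
    ∃ (Γ : Fin n → Multiset D) (E : Fin n → Fin m → Multiset D) (s : Fin n → ℕ) (p₀ : ℕ),
      Der i Γ M α p₀ ∧ (∀ k, DerBag i (σ k) (E k) (Γ k) (s k)) ∧ Δ = ∑ k, E k := by
  induction M generalizing m Δ α p with
  | var k =>
    simp only [Tm.subst] at h
    refine ⟨single k α, Pi.single k Δ, Pi.single k p, 0, .var k α, fun j => ?_, by simp⟩
    rcases eq_or_ne j k with rfl | hj
    · simpa [single] using DerBag.singleton h
    · simpa [single, hj] using (DerBag.zero : DerBag i (σ j) 0 0 0)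
  | bot => cases h
  | @lam n M ih =>
    obtain ⟨a, β, rfl, hM⟩ := h.lam_inv
    obtain ⟨Γ, E, s, p₀, hM', hσ, hΔ⟩ := ih hM
    have hE₀ : E 0 = Pi.single 0 (Γ 0) := (hσ 0).var_inv
    have hE : ∀ j, ∃ E', E j.succ = renameCtx Fin.succ E' ∧
        DerBag i (σ j) E' (Γ j.succ) (s j.succ) := fun j =>
      (hσ j.succ).map_inv _ fun hd => hd.rename_inv _ Fin.succ
    choose E' hE' hσ' using hE
    rw [Fin.sum_univ_succ, hE₀, Finset.sum_congr rfl fun j _ => hE' j, ← map_sum,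
      ← cons_eq_single_add_renameCtx_succ, Fin.cons_inj] at hΔ
    obtain ⟨rfl, rfl⟩ := hΔ
    exact ⟨Fin.tail Γ, E', fun j => s j.succ, p₀, .lam (by rwa [Fin.cons_self_tail]), hσ', rfl⟩
  | app M N ihM ihN =>
    obtain ⟨Δ, Δ', a, m, t, hM, hN, rfl, rfl⟩ := h.app_inv
    obtain ⟨Γ, E, s, p, hM', hσ, rfl⟩ := ihM hM
    obtain ⟨Γ', E', s', t', hN', hσ', rfl⟩ := hN.subst_inv ihN
    exact ⟨Γ + Γ', E + E', s + s', p + t' + 1, hM'.app_of_derBag hN',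
      fun k => (hσ k).add (hσ' k), by simp [Finset.sum_add_distrib]⟩

namespace Der

variable {n : ℕ} {P : Tm (n + 1)} {N : Tm n} {α : D}

theorem subst1 {Γ E : Fin n → Multiset D} {a : Multiset D} {m s : ℕ}
    (hP : Der i (Fin.cons a Γ) P α m) (hN : DerBag i N E a s) :
    Der i (Γ + E) (P.subst1 N) α (m + s) := by
  have hσ : ∀ k, DerBag i (Fin.cases (motive := fun _ => Tm n) N Tm.var k)
      ((Fin.cons E fun j => Pi.single j (Γ j) : Fin (n + 1) → Fin n → Multiset D) k)
      ((Fin.cons a Γ : Fin (n + 1) → Multiset D) k) ((Fin.cons s 0 : Fin (n + 1) → ℕ) k) := by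
    intro k
    cases k using Fin.cases with
    | zero => exact hN
    | succ j => exact DerBag.var j (Γ j)
  have := hP.subst P hσ
  simp only [Fin.sum_univ_succ, Fin.cons_zero, Fin.cons_succ, Finset.univ_sum_single,
    Pi.zero_apply, Finset.sum_const_zero, add_zero] at this
  rwa [add_comm Γ, Tm.subst1]

theorem subst1_inv {Δ : Fin n → Multiset D} {p : ℕ} (h : Der i Δ (P.subst1 N) α p) :
    ∃ a Γ E m s, Der i (Fin.cons a Γ) P α m ∧ DerBag i N E a s ∧ Δ = Γ + E := by
  obtain ⟨Γ, E, s, p₀, hP, hσ, rfl⟩ := Der.subst_inv P h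
  have hE : ∀ j, E j.succ = Pi.single j (Γ j.succ) := fun j => (hσ j.succ).var_inv
  refine ⟨Γ 0, Fin.tail Γ, E 0, p₀, s 0, by rwa [Fin.cons_self_tail], hσ 0, ?_⟩
  rw [Fin.sum_univ_succ, Finset.sum_congr rfl fun j _ => hE j, Finset.univ_sum_single, add_comm]
  rfl

theorem beta_redex (hi : Function.Injective i) {Γ : Fin n → Multiset D} {p : ℕ}
    (h : Der i Γ (.app (.lam P) N) α p) : ∃ p' < p, Der i Γ (P.subst1 N) α p' := by
  obtain ⟨Γ, E, a, m, s, hP, hN, rfl, rfl⟩ := h.app_inv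
  obtain ⟨a', β, hab, hP⟩ := hP.lam_inv
  obtain ⟨rfl, rfl⟩ := Prod.ext_iff.1 (hi hab)
  exact ⟨m + s, by omega, hP.subst1 hN⟩

theorem redex_of_subst1 {Γ : Fin n → Multiset D} {p : ℕ} (h : Der i Γ (P.subst1 N) α p) :
    ∃ p', Der i Γ (.app (.lam P) N) α p' := by
  obtain ⟨a, Γ, E, m, s, hP, hN, rfl⟩ := h.subst1_inv
  exact ⟨_, hP.lam.app_of_derBag hN⟩

variable {M M' : Tm n} {Γ : Fin n → Multiset D} {p : ℕ}

theorem subject_reduction (hi : Function.Injective i) (hβ : Beta M M') (h : Der i Γ M α p) :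
    ∃ p' ≤ p, Der i Γ M' α p' := by
  induction hβ generalizing α p with
  | redex P N =>
    obtain ⟨p', hp', h'⟩ := h.beta_redex hi
    exact ⟨p', hp'.le, h'⟩
  | appL _ ih =>
    obtain ⟨Γ, E, a, m, s, hM, hN, rfl, rfl⟩ := h.app_inv
    obtain ⟨m', hm', hM'⟩ := ih hM
    exact ⟨_, by omega, hM'.app_of_derBag hN⟩
  | appR _ ih =>
    obtain ⟨Γ, E, a, m, s, hM, hN, rfl, rfl⟩ := h.app_inv
    obtain ⟨s', hs', hN'⟩ := hN.exists_le_of_forall ih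
    exact ⟨_, by omega, hM.app_of_derBag hN'⟩
  | lam _ ih =>
    obtain ⟨a, β, rfl, hM⟩ := h.lam_inv
    obtain ⟨p', hp', hM'⟩ := ih hM
    exact ⟨p', hp', hM'.lam⟩

theorem subject_expansion (hβ : Beta M M') (h : Der i Γ M' α p) : ∃ p', Der i Γ M α p' := by
  induction hβ generalizing α p with
  | redex P N => exact h.redex_of_subst1
  | appL _ ih =>
    obtain ⟨Γ, E, a, m, s, hM, hN, rfl, rfl⟩ := h.app_inv
    obtain ⟨m', hM'⟩ := ih hM
    exact ⟨_, hM'.app_of_derBag hN⟩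
  | appR _ ih =>
    obtain ⟨Γ, E, a, m, s, hM, hN, rfl, rfl⟩ := h.app_inv
    obtain ⟨s', hN'⟩ := hN.exists_of_forall ih
    exact ⟨_, hM.app_of_derBag hN'⟩
  | lam _ ih =>
    obtain ⟨a, β, rfl, hM⟩ := h.lam_inv
    obtain ⟨p', hM'⟩ := ih hM
    exact ⟨p', hM'.lam⟩

end Der

theorem typable_iff_of_eqvGen (hi : Function.Injective i) {n : ℕ} {M M' : Tm n}
    (h : EqvGen Beta M M') {Γ : Fin n → Multiset D} {α : D} :
    (∃ p, Der i Γ M α p) ↔ ∃ p, Der i Γ M' α p := by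
  induction h with
  | rel M M' hβ =>
    refine ⟨fun ⟨p, h⟩ => ?_, fun ⟨p, h⟩ => h.subject_expansion hβ⟩
    obtain ⟨p', -, h'⟩ := h.subject_reduction hi hβ
    exact ⟨p', h'⟩
  | refl => rfl
  | symm _ _ _ ih => exact ih.symm
  | trans _ _ _ _ _ ih ih' => exact ih.trans ih'

theorem DerBag.da_or_beta (hi : Function.Injective i) {n : ℕ} {N : Tm n}
    (hN : ∀ {Γ α p}, Der i Γ N α p →
      Der i Γ (Da N) α p ∨ ∃ N' p', Beta N N' ∧ p' < p ∧ Der i Γ N' α p')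
    {E : Fin n → Multiset D} {a : Multiset D} {s : ℕ} (h : DerBag i N E a s) :
    DerBag i (Da N) E a s ∨ ∃ N' s', Beta N N' ∧ s' < s ∧ DerBag i N' E a s' := by
  induction h with
  | zero => exact .inl .zero
  | cons hd h ih =>
    rcases hN hd with hd' | ⟨N', p', hβ, hp, hd'⟩
    · rcases ih with h' | ⟨N', s', hβ, hs, h'⟩
      · exact .inl (.cons hd' h')
      · obtain ⟨p', hp, hd''⟩ := hd.subject_reduction hi hβ
        exact .inr ⟨N', p' + s', hβ, by omega, .cons hd'' h'⟩
    · obtain ⟨s', hs, h'⟩ := h.exists_le_of_forall fun hd => hd.subject_reduction hi hβ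
      exact .inr ⟨N', p' + s', hβ, by omega, .cons hd' h'⟩

-- The redex contracted on the right is one that the derivation types, so one application rule
-- disappears with it.
theorem Der.da_or_beta (hi : Function.Injective i) {n : ℕ} (M : Tm n)
    {Γ : Fin n → Multiset D} {α : D} {p : ℕ} (h : Der i Γ M α p) :
    Der i Γ (Da M) α p ∨ ∃ M' p', Beta M M' ∧ p' < p ∧ Der i Γ M' α p' := by
  induction M generalizing α p with
  | var k => exact .inl h
  | bot => cases h
  | lam M ih =>
    obtain ⟨a, β, rfl, hM⟩ := h.lam_inv
    rcases ih hM with hM' | ⟨M', p', hβ, hp, hM'⟩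
    · rw [da_lam_of_ne_bot hM'.ne_bot]
      exact .inl hM'.lam
    · exact .inr ⟨_, p', .lam hβ, hp, hM'.lam⟩
  | app M N ihM ihN =>
    obtain ⟨Γ, E, a, m, s, hM, hN, rfl, rfl⟩ := h.app_inv
    rcases ihM hM with hM' | ⟨M', m', hβ, hm, hM'⟩
    · by_cases hlam : ∃ Q, Da M = .lam Q
      · obtain ⟨P, rfl⟩ := exists_eq_lam_of_da_eq_lam hlam.choose_spec
        obtain ⟨p', hp', h'⟩ := (hM.app_of_derBag hN).beta_redex hi
        exact .inr ⟨_, p', .redex P N, hp', h'⟩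
      · push Not at hlam
        rcases hN.da_or_beta hi ihN with hN' | ⟨N', s', hβ, hs, hN'⟩
        · rw [da_app_of_ne_bot_of_ne_lam hM'.ne_bot hlam]
          exact .inl (hM'.app_of_derBag hN')
        · exact .inr ⟨_, _, .appR hβ, by omega, hM.app_of_derBag hN'⟩
    · exact .inr ⟨_, _, .appL hβ, by omega, hM'.app_of_derBag hN⟩

theorem Der.exists_reduct_da (hi : Function.Injective i) {n : ℕ} {M : Tm n}
    {Γ : Fin n → Multiset D} {α : D} {p : ℕ} (h : Der i Γ M α p) :
    ∃ M', ReflTransGen Beta M M' ∧ ∃ p', Der i Γ (Da M') α p' := by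
  induction p using Nat.strong_induction_on generalizing M with
  | _ p ih =>
    rcases h.da_or_beta hi with h' | ⟨M', p', hβ, hp, h'⟩
    · exact ⟨M, .refl, p, h'⟩
    · obtain ⟨M'', hred, hM''⟩ := ih p' hp h'
      exact ⟨M'', .head hβ hred, hM''⟩

end

theorem stmt_13_general {D : Type} (i : Multiset D × D → D)
    (hi : Function.Injective i) {n : ℕ} (M : Tm n) (hM : BotFree M) :
    (∀ (Γ : Fin n → Multiset D) (α : D),
      (∃ m, Der i Γ M α m) ↔
        ∃ M' : Tm n, BotFree M' ∧ Relation.EqvGen (fun a b : Tm n => Beta a b) M' M ∧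
          ∃ m, Der i Γ (Da M') α m) ∧
    {p : (Fin n → Multiset D) × D | ∃ m, Der i p.1 M p.2 m} =
      ⋃ M' ∈ {M' : Tm n | BotFree M' ∧ Relation.EqvGen (fun a b : Tm n => Beta a b) M' M},
        {p : (Fin n → Multiset D) × D | ∃ m, Der i p.1 (Da M') p.2 m} := by
  have approx : ∀ Γ α, (∃ m, Der i Γ M α m) ↔
      ∃ M' : Tm n, BotFree M' ∧ EqvGen Beta M' M ∧ ∃ m, Der i Γ (Da M') α m := by
    refine fun Γ α => ⟨fun ⟨m, h⟩ => ?_, fun ⟨M', _, hM', m, h⟩ =>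
      (typable_iff_of_eqvGen hi hM').1 ⟨m, h.of_da⟩⟩
    obtain ⟨M', hred, m', h'⟩ := h.exists_reduct_da hi
    exact ⟨M', hM.of_reflTransGen hred, .symm _ _ (EqvGen.reflTransGen_le_eqvGen _ _ _ hred),
      m', h'⟩
  refine ⟨approx, ?_⟩
  ext ⟨Γ, α⟩
  simp only [Set.mem_ofPred_eq, Set.mem_iUnion, approx, exists_prop, and_assoc]

/-- Approximation theorem: `Γ ⊢ M : α` is derivable iff `Γ ⊢ t : α` is derivable for
some finite approximant `t = ω(M') ∈ BT*(M)` with `M' =_β M`.  Consequently the logical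
interpretation of `M` is the union of the logical interpretations of its finite
Böhm-tree approximants. -/
theorem stmt_13 {D : Type} [Infinite D] (i : Multiset D × D → D)
    (hi : Function.Injective i) {n : ℕ} (M : Tm n) (hM : BotFree M) :
    (∀ (Γ : Fin n → Multiset D) (α : D),
      (∃ m, Der i Γ M α m) ↔
        ∃ M' : Tm n, BotFree M' ∧ Relation.EqvGen (fun a b : Tm n => Beta a b) M' M ∧
          ∃ m, Der i Γ (Da M') α m) ∧
    {p : (Fin n → Multiset D) × D | ∃ m, Der i p.1 M p.2 m} =
      ⋃ M' ∈ {M' : Tm n | BotFree M' ∧ Relation.EqvGen (fun a b : Tm n => Beta a b) M' M},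
        {p : (Fin n → Multiset D) × D | ∃ m, Der i p.1 (Da M') p.2 m} :=
  stmt_13_general i hi M hM
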